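/- arXiv:1509.06784 — 4 statements merged into one kernel-verified Lean document; each statement's English description precedes it below -/
import Mathlib

section
/- TS^ℓ(A) is generated as an associative unital algebra by the image of the symmetrization map sym_ℓ(A). -/
open PiTensorProduct
open scoped TensorProduct

/-- The symmetrization map `sym_ℓ(a) = Σ_{i=1}^ℓ 1^{⊗(i-1)} ⊗ a ⊗ 1^{⊗(ℓ-i)}`. -/
noncomputable def symTen (k A : Type*) [Field k] [Ring A] [Algebra k A] (ℓ : ℕ)
    (a : A) : ⨂[k] _ : Fin ℓ, A :=
  ∑ i : Fin ℓ, tprod k (Function.update (fun _ : Fin ℓ => (1 : A)) i a)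

section Aux

variable (k A : Type*) [Field k] [Ring A] [Algebra k A] (ℓ : ℕ)

lemma reindex_one' (σ : Equiv.Perm (Fin ℓ)) :
    PiTensorProduct.reindex k (fun _ : Fin ℓ => A) σ (1 : ⨂[k] _ : Fin ℓ, A) = 1 := by
  rw [PiTensorProduct.one_def, PiTensorProduct.reindex_tprod]; rfl

lemma reindex_mul' (σ : Equiv.Perm (Fin ℓ)) (x y : ⨂[k] _ : Fin ℓ, A) :
    PiTensorProduct.reindex k (fun _ : Fin ℓ => A) σ (x * y) =
      PiTensorProduct.reindex k (fun _ : Fin ℓ => A) σ x *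
        PiTensorProduct.reindex k (fun _ : Fin ℓ => A) σ y := by
  induction x using PiTensorProduct.induction_on with
  | smul_tprod r f =>
    induction y using PiTensorProduct.induction_on with
    | smul_tprod s g =>
      simp only [PiTensorProduct.smul_tprod_mul_smul_tprod, map_smul,
        PiTensorProduct.reindex_tprod, PiTensorProduct.smul_tprod_mul_smul_tprod]
      congr 1
    | add y₁ y₂ h₁ h₂ =>
      simp only [mul_add, map_add, h₁, h₂]
  | add x₁ x₂ h₁ h₂ =>
    simp only [add_mul, map_add, h₁, h₂]

lemma reindex_symTen (σ : Equiv.Perm (Fin ℓ)) (b : A) :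
    PiTensorProduct.reindex k (fun _ : Fin ℓ => A) σ (symTen k A ℓ b) = symTen k A ℓ b := by
  rw [symTen, map_sum]
  simp_rw [PiTensorProduct.reindex_tprod]
  have h : ∀ i : Fin ℓ, (fun j => Function.update (fun _ : Fin ℓ => (1 : A)) i b (σ.symm j))
      = Function.update (fun _ : Fin ℓ => (1 : A)) (σ i) b := by
    intro i
    funext j
    simp [Function.update_apply, Equiv.symm_apply_eq]
  simp_rw [h]
  exact Equiv.sum_comp σ (fun i => tprod k (Function.update (fun _ : Fin ℓ => (1 : A)) i b))

/-- Sum over injections of `Fin m` into the tensor slots. -/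
noncomputable def TT (m : ℕ) (a : Fin m → A) : ⨂[k] _ : Fin ℓ, A :=
  ∑ g : Fin m ↪ Fin ℓ, tprod k (Function.extend g a 1)

lemma update_one_mul_extend (b : A) {m : ℕ} (a : Fin m → A) (i : Fin ℓ) (g : Fin m ↪ Fin ℓ)
    (hi : i ∉ Set.range ⇑g) :
    Function.update (fun _ : Fin ℓ => (1 : A)) i b * Function.extend ⇑g a 1 =
      Function.extend (Fin.cons i ⇑g : Fin (m + 1) → Fin ℓ) (Fin.cons b a) 1 := by
  classical
  have hinj : Function.Injective (Fin.cons i ⇑g : Fin (m + 1) → Fin ℓ) := by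
    rw [Fin.cons_injective_iff]
    exact ⟨hi, g.injective⟩
  funext j
  simp only [Pi.mul_apply, Function.update_apply]
  by_cases hj : j = i
  · subst hj
    rw [if_pos rfl, Function.extend_apply' _ _ _ (by simpa [Set.mem_range] using hi)]
    have := hinj.extend_apply (Fin.cons b a) 1 0
    simpa using this.symm
  · rw [if_neg hj, one_mul]
    by_cases hr : ∃ t, g t = j
    · obtain ⟨t, rfl⟩ := hr
      rw [g.injective.extend_apply]
      have := hinj.extend_apply (Fin.cons b a) 1 t.succ
      simpa using this.symm
    · rw [Function.extend_apply' _ _ _ hr, Function.extend_apply']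
      rintro ⟨s, hs⟩
      cases s using Fin.cases with
      | zero => rw [Fin.cons_zero] at hs; exact hj hs.symm
      | succ t => rw [Fin.cons_succ] at hs; exact hr ⟨t, hs⟩

lemma update_one_mul_extend' (b : A) {m : ℕ} (a : Fin m → A) (t : Fin m) (g : Fin m ↪ Fin ℓ) :
    Function.update (fun _ : Fin ℓ => (1 : A)) (g t) b * Function.extend ⇑g a 1 =
      Function.extend ⇑g (Function.update a t (b * a t)) 1 := by
  classical
  funext j
  simp only [Pi.mul_apply, Function.update_apply]
  by_cases hj : j = g t
  · subst hj
    rw [if_pos rfl, g.injective.extend_apply, g.injective.extend_apply,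
      Function.update_self]
  · rw [if_neg hj, one_mul]
    by_cases hr : ∃ s, g s = j
    · obtain ⟨s, rfl⟩ := hr
      rw [g.injective.extend_apply, g.injective.extend_apply,
        Function.update_of_ne (fun h => hj (by rw [h]))]
    · rw [Function.extend_apply' _ _ _ hr, Function.extend_apply' _ _ _ hr]

lemma symTen_mul_TT (b : A) (m : ℕ) (a : Fin m → A) :
    symTen k A ℓ b * TT k A ℓ m a =
      TT k A ℓ (m + 1) (Fin.cons b a) +
        ∑ i : Fin m, TT k A ℓ m (Function.update a i (b * a i)) := by
  classical
  rw [symTen, TT, Finset.sum_mul_sum]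
  simp_rw [PiTensorProduct.tprod_mul_tprod]
  rw [← Finset.sum_product']
  rw [← Finset.sum_filter_add_sum_filter_not (Finset.univ ×ˢ Finset.univ)
    (fun x : Fin ℓ × (Fin m ↪ Fin ℓ) => x.1 ∈ Set.range ⇑x.2), add_comm]
  congr 1
  · -- non-hit part gives `TT (m+1) (Fin.cons b a)`
    rw [TT]
    have hnotmem : ∀ (x : Fin ℓ × (Fin m ↪ Fin ℓ)),
        x ∈ (Finset.univ ×ˢ Finset.univ).filter
          (fun x : Fin ℓ × (Fin m ↪ Fin ℓ) => ¬x.1 ∈ Set.range ⇑x.2) →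
        x.1 ∉ Set.range ⇑x.2 := by
      intro x hx
      simpa using (Finset.mem_filter.mp hx).2
    refine Finset.sum_bij'
      (fun x hx => (⟨Fin.cons x.1 ⇑x.2, by
        rw [Fin.cons_injective_iff]; exact ⟨hnotmem x hx, x.2.injective⟩⟩ : Fin (m + 1) ↪ Fin ℓ))
      (fun h _ => (h 0, ⟨⇑h ∘ Fin.succ, h.injective.comp (Fin.succ_injective m)⟩))
      ?_ ?_ ?_ ?_ ?_
    · intro x hx
      exact Finset.mem_univ _
    · intro h hh
      simp only [Finset.mem_filter, Finset.mem_product, Finset.mem_univ, true_and]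
      rintro ⟨t, ht⟩
      exact Fin.succ_ne_zero t (h.injective ht)
    · intro x hx
      ext <;> simp
    · intro h hh
      apply Function.Embedding.ext
      intro s
      refine Fin.cases ?_ (fun t => ?_) s <;> simp
    · intro x hx
      rw [update_one_mul_extend A ℓ b a x.1 x.2 (hnotmem x hx)]
      rfl
  · -- hit part gives the update sum
    rw [Finset.sum_filter, Finset.sum_product_right]
    have step : ∀ g : Fin m ↪ Fin ℓ,
        (∑ i : Fin ℓ, if i ∈ Set.range ⇑g then
            tprod k (Function.update (fun _ : Fin ℓ => (1 : A)) i b * Function.extend ⇑g a 1)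
          else 0) =
        ∑ t : Fin m,
          tprod k (Function.extend ⇑g (Function.update a t (b * a t)) 1) := by
      intro g
      rw [← Finset.sum_filter]
      have himg : Finset.univ.filter (fun i : Fin ℓ => i ∈ Set.range ⇑g) =
          Finset.univ.image ⇑g := by
        ext i
        simp [Set.mem_range, eq_comm]
      rw [himg, Finset.sum_image (fun s _ t _ h => g.injective h)]
      refine Finset.sum_congr rfl fun t _ => ?_
      rw [update_one_mul_extend' A ℓ b a t g]
    simp_rw [step]
    rw [Finset.sum_comm]
    rfl

lemma TT_zero (a : Fin 0 → A) : TT k A ℓ 0 a = 1 := by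
  classical
  rw [TT]
  haveI : Unique (Fin 0 ↪ Fin ℓ) :=
    ⟨⟨⟨Fin.elim0, fun x => x.elim0⟩⟩, fun g => Function.Embedding.ext fun x => x.elim0⟩
  rw [Fintype.sum_unique]
  have h : Function.extend (⇑(default : Fin 0 ↪ Fin ℓ)) a 1 = fun _ => (1 : A) := by
    funext j
    exact Function.extend_apply' _ _ _ (by rintro ⟨t, -⟩; exact t.elim0)
  rw [h]
  rfl

lemma TT_mem (m : ℕ) (a : Fin m → A) :
    TT k A ℓ m a ∈ Algebra.adjoin k (Set.range (symTen k A ℓ)) := by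
  induction m with
  | zero => rw [TT_zero]; exact one_mem _
  | succ m ih =>
    have key := symTen_mul_TT k A ℓ (a 0) m (Fin.tail a)
    rw [Fin.cons_self_tail a] at key
    rw [eq_sub_of_add_eq key.symm]
    exact sub_mem (mul_mem (Algebra.subset_adjoin ⟨a 0, rfl⟩) (ih _))
      (Subalgebra.sum_mem _ fun i _ => ih _)

lemma TT_top (a : Fin ℓ → A) :
    TT k A ℓ ℓ a = ∑ σ : Equiv.Perm (Fin ℓ), tprod k (fun i => a (σ.symm i)) := by
  rw [TT]
  refine Finset.sum_nbij'
    (fun g => Equiv.ofBijective ⇑g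
      ⟨g.injective, Finite.injective_iff_surjective.mp g.injective⟩)
    (fun σ => σ.toEmbedding)
    (fun _ _ => Finset.mem_univ _) (fun _ _ => Finset.mem_univ _)
    (fun g _ => Function.Embedding.ext fun x => rfl)
    (fun σ _ => Equiv.ext fun x => rfl)
    (fun g _ => ?_)
  congr 1
  funext j
  set σ := Equiv.ofBijective ⇑g
    ⟨g.injective, Finite.injective_iff_surjective.mp g.injective⟩ with hσ
  have h1 : Function.extend ⇑g a 1 (g (σ.symm j)) = a (σ.symm j) :=
    g.injective.extend_apply a 1 (σ.symm j)
  have h2 : g (σ.symm j) = j := σ.apply_symm_apply j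
  conv_lhs => rw [← h2]
  exact h1

lemma sum_reindex_mem (x : ⨂[k] _ : Fin ℓ, A) :
    (∑ σ : Equiv.Perm (Fin ℓ), PiTensorProduct.reindex k (fun _ : Fin ℓ => A) σ x)
      ∈ Algebra.adjoin k (Set.range (symTen k A ℓ)) := by
  have hx : x ∈ (⊤ : Submodule k (⨂[k] _ : Fin ℓ, A)) := trivial
  rw [← PiTensorProduct.span_tprod_eq_top] at hx
  induction hx using Submodule.span_induction with
  | mem y hy =>
    obtain ⟨f, rfl⟩ := hy
    simp_rw [PiTensorProduct.reindex_tprod]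
    rw [← TT_top]
    exact TT_mem k A ℓ ℓ f
  | zero => simp_rw [map_zero]; simpa using zero_mem (Algebra.adjoin k (Set.range (symTen k A ℓ)))
  | add y z _ _ hy hz => simp_rw [map_add, Finset.sum_add_distrib]; exact add_mem hy hz
  | smul c y _ hy => simp_rw [map_smul, ← Finset.smul_sum]; exact Subalgebra.smul_mem _ hy c

end Aux

/-- `TS^ℓ(A)` is generated as a unital associative algebra by the image of the
symmetrization map: the subalgebra of `A^{⊗ℓ}` generated by `sym_ℓ(A)` is exactly the set of
symmetric tensors. -/
theorem ts_generated_by_sym (k A : Type*) [Field k] [CharZero k] [Ring A] [Algebra k A]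
    (ℓ : ℕ) (hℓ : 0 < ℓ) :
    (Algebra.adjoin k (Set.range (symTen k A ℓ)) : Set (⨂[k] _ : Fin ℓ, A)) =
      {x | ∀ σ : Equiv.Perm (Fin ℓ),
        PiTensorProduct.reindex k (fun _ : Fin ℓ => A) σ x = x} := by
  classical
  ext x
  simp only [SetLike.mem_coe, Set.mem_setOf_eq]
  constructor
  · intro hx σ
    induction hx using Algebra.adjoin_induction with
    | mem y hy => obtain ⟨b, rfl⟩ := hy; exact reindex_symTen k A ℓ σ b
    | algebraMap r => rw [Algebra.algebraMap_eq_smul_one, map_smul, reindex_one']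
    | add y z _ _ hy hz => rw [map_add, hy, hz]
    | mul y z _ _ hy hz => rw [reindex_mul', hy, hz]
  · intro hx
    have h2 : (∑ σ : Equiv.Perm (Fin ℓ), PiTensorProduct.reindex k (fun _ : Fin ℓ => A) σ x)
        = ((ℓ.factorial : k)) • x := by
      calc (∑ σ : Equiv.Perm (Fin ℓ), PiTensorProduct.reindex k (fun _ : Fin ℓ => A) σ x)
          = ∑ _σ : Equiv.Perm (Fin ℓ), x := Finset.sum_congr rfl fun σ _ => hx σ
        _ = (Fintype.card (Equiv.Perm (Fin ℓ))) • x := by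
            rw [Finset.sum_const, Finset.card_univ]
        _ = ((ℓ.factorial : k)) • x := by
            rw [Fintype.card_perm, Fintype.card_fin, Nat.cast_smul_eq_nsmul]
    have h3 : x = ((ℓ.factorial : k))⁻¹ •
        ∑ σ : Equiv.Perm (Fin ℓ), PiTensorProduct.reindex k (fun _ : Fin ℓ => A) σ x := by
      rw [h2, smul_smul, inv_mul_cancel₀ (by exact_mod_cast (Nat.factorial_pos ℓ).ne'), one_smul]
    rw [h3]
    exact Subalgebra.smul_mem _ (sum_reindex_mem k A ℓ x) _
end

section
/- Let {1_A} ∪ B be a basis of the vector space A with a total order ≤ on B. Then the set consisting of 1_A^{⊗ℓ} together with all products sym_ℓ(b_1)·sym_ℓ(b_2)⋯sym_ℓ(b_j) for b_1 ≤ b_2 ≤ ⋯ ≤ b_j elements of B and 1 ≤ j ≤ ℓ, is a vector space basis of TS^ℓ(A). -/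
open PiTensorProduct
open scoped TensorProduct

/-- The submodule of symmetric tensors `TS^ℓ(A) ⊆ A^{⊗ℓ}`. -/
noncomputable def tsSubmodule (k A : Type*) [Field k] [Ring A] [Algebra k A] (ℓ : ℕ) :
    Submodule k (⨂[k] _ : Fin ℓ, A) where
  carrier := {x | ∀ σ : Equiv.Perm (Fin ℓ),
    PiTensorProduct.reindex k (fun _ : Fin ℓ => A) σ x = x}
  add_mem' hx hy σ := by rw [map_add, hx σ, hy σ]
  zero_mem' σ := map_zero _
  smul_mem' c x hx σ := by rw [map_smul, hx σ]

/-!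
Let `E_g = e_{g 1} ⊗ ⋯ ⊗ e_{g ℓ}` be the basis of `A^{⊗ℓ}` indexed by tuples
`g : Fin ℓ → WithTop ι`, where `⊤` indexes `1_A`. A tensor is symmetric iff its coordinates are
constant on permutation orbits of tuples, and each orbit contains exactly one monotone tuple,
namely a sorted list `l` of length `≤ ℓ` padded with `⊤`. Hence the orbit sums `O_l` form a basis
of `TS^ℓ(A)`, with coordinates read off at the padded tuples.

Expanding `P_l = sym(b_{l₁}) ⋯ sym(b_{lⱼ})` as a sum over the ways of placing the factors into the
`ℓ` slots, the coordinate of `P_l` at the padded tuple of `l'`, when `|l| ≤ |l'|`, is the number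
of placements reproducing that tuple: there are none unless `l = l'`, and at least one if
`l = l'`. So the `P_l` are triangular with respect to length in the basis `O_l`, with diagonal
entries nonzero in characteristic `0`.
-/

open Module

namespace Module.Basis

variable {ι R M β : Type*} [DivisionRing R] [AddCommGroup M] [Module R M] [LinearOrder β]
  (O : Basis ι R M) {deg : ι → β} {v : ι → M}

theorem linearIndependent_of_triangular (hdiag : ∀ i, O.repr (v i) i ≠ 0)
    (htri : ∀ i j, i ≠ j → deg i ≤ deg j → O.repr (v i) j = 0) : LinearIndependent R v := by
  rw [linearIndependent_iff]
  intro c hc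
  by_contra hne
  obtain ⟨i₀, hi₀, hmax⟩ := c.support.exists_max_image deg (Finsupp.support_nonempty_iff.2 hne)
  have hcoord := congrArg (fun x => O.repr x i₀) hc
  simp only [Finsupp.linearCombination_apply, Finsupp.sum, map_sum, map_smul,
    Finsupp.coe_finsetSum, Finset.sum_apply, Finsupp.smul_apply, smul_eq_mul, map_zero,
    Finsupp.coe_zero, Pi.zero_apply] at hcoord
  rw [Finset.sum_eq_single_of_mem i₀ hi₀
    fun i hi hi₀ => by rw [htri i i₀ hi₀ (hmax i hi), mul_zero]] at hcoord
  exact mul_ne_zero (Finsupp.mem_support_iff.1 hi₀) (hdiag i₀) hcoord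

theorem span_eq_top_of_triangular [WellFoundedLT β] (hdiag : ∀ i, O.repr (v i) i ≠ 0)
    (htri : ∀ i j, i ≠ j → deg i ≤ deg j → O.repr (v i) j = 0) :
    Submodule.span R (Set.range v) = ⊤ := by
  classical
  set p := Submodule.span R (Set.range v)
  have hO : ∀ i, O i ∈ p := by
    intro i
    induction i using (InvImage.wf deg wellFounded_lt).induction with
    | _ i ih =>
      have hv : O.repr (v i) i • O i
          = v i - ∑ j ∈ (O.repr (v i)).support.erase i, O.repr (v i) j • O j := by
        rw [eq_sub_iff_add_eq, Finset.add_sum_erase _ (fun j => O.repr (v i) j • O j)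
          (Finsupp.mem_support_iff.2 (hdiag i))]
        exact O.linearCombination_repr (v i)
      rw [← p.smul_mem_iff (hdiag i), hv]
      refine p.sub_mem (Submodule.subset_span ⟨i, rfl⟩)
        (p.sum_mem fun j hj => p.smul_mem _ (ih j ?_))
      obtain ⟨hji, hj⟩ := Finset.mem_erase.1 hj
      exact lt_of_not_ge fun hle => Finsupp.mem_support_iff.1 hj (htri i j hji.symm hle)
  rw [eq_top_iff, ← O.span_eq]
  exact Submodule.span_le.2 (Set.range_subset_iff.2 hO)

theorem exists_basis_eq_of_triangular [WellFoundedLT β] (hdiag : ∀ i, O.repr (v i) i ≠ 0)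
    (htri : ∀ i j, i ≠ j → deg i ≤ deg j → O.repr (v i) j = 0) :
    ∃ B : Basis ι R M, ⇑B = v :=
  ⟨.mk (O.linearIndependent_of_triangular hdiag htri)
    (O.span_eq_top_of_triangular hdiag htri).ge, Basis.coe_mk _ _⟩

end Module.Basis

theorem List.prod_ofFn_sum {R κ : Type*} [Semiring R] [Fintype κ] {n : ℕ} (f : Fin n → κ → R) :
    (List.ofFn fun r => ∑ c, f r c).prod
      = ∑ t : Fin n → κ, (List.ofFn fun r => f r (t r)).prod := by
  induction n with
  | zero => simp
  | succ n ih =>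
    rw [List.ofFn_succ, List.prod_cons, ih, Finset.sum_mul_sum, ← Fintype.sum_prod_type',
      ← (Fin.consEquiv fun _ => κ).sum_comp]
    simp [List.ofFn_succ, Fin.consEquiv]

theorem List.prod_ofFn_eq_of_forall_ne {M : Type*} [Monoid M] {n : ℕ} (f : Fin n → M) (r₀ : Fin n)
    (h : ∀ r ≠ r₀, f r = 1) : (List.ofFn f).prod = f r₀ := by
  induction n with
  | zero => exact r₀.elim0
  | succ n ih =>
    rw [List.ofFn_succ, List.prod_cons]
    cases r₀ using Fin.cases with
    | zero =>
      rw [List.prod_eq_one (by simpa using fun r => h r.succ (Fin.succ_ne_zero r)), mul_one]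
    | succ r₀ =>
      rw [h 0 (Fin.succ_ne_zero r₀).symm, one_mul,
        ih _ r₀ fun r hr => h r.succ (Fin.succ_injective _ |>.ne hr)]

open Finset in
theorem Fin.injective_of_forall_lt_mem_range {j m n : ℕ} {t : Fin j → Fin n} (hjm : j ≤ m)
    (hmn : m ≤ n) (hcov : ∀ i : Fin n, (i : ℕ) < m → i ∈ Set.range t) :
    j = m ∧ Function.Injective t ∧ ∀ r, (t r : ℕ) < m := by
  classical
  set I : Finset (Fin n) := {i | (i : ℕ) < m}
  have hI : #I = m := by rw [Fin.card_filter_val_lt, min_eq_right hmn]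
  have hsub : I ⊆ univ.image t := fun i hi => by
    obtain ⟨r, rfl⟩ := hcov i (by simpa [I] using hi)
    exact mem_image_of_mem t (mem_univ r)
  have himage : #(univ.image t) ≤ j := card_image_le.trans (by simp)
  have hj : j = m := le_antisymm hjm (hI ▸ (card_le_card hsub).trans himage)
  have heq : I = univ.image t := eq_of_subset_of_card_le hsub (by omega)
  refine ⟨hj, fun r r' h => ?_, fun r => ?_⟩
  · have : Set.InjOn t (univ : Finset (Fin j)) := card_image_iff.1 (by simp [← heq, hI, hj])
    exact this (by simp) (by simp) h
  · have hr := mem_image_of_mem t (mem_univ r)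
    rw [← heq] at hr
    simpa [I] using hr

open Finset in
theorem List.eq_of_pairwise_of_get_comp_equiv {ι : Type*} [PartialOrder ι] {l l' : List ι}
    (hl : l.Pairwise (· ≤ ·)) (hl' : l'.Pairwise (· ≤ ·)) (φ : Fin l.length ≃ Fin l'.length)
    (h : ∀ r, l'.get (φ r) = l.get r) : l = l' := by
  refine List.Perm.eq_of_pairwise' hl hl' (Multiset.coe_eq_coe.1 ?_)
  calc (l : Multiset ι) = univ.val.map l.get := by rw [Fin.univ_val_map, List.ofFn_get]
    _ = (univ.val.map φ).map l'.get := by rw [Multiset.map_map]; congr; funext r; exact (h r).symm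
    _ = l' := by rw [Multiset.map_univ_val_equiv, Fin.univ_val_map, List.ofFn_get]

namespace Tuple

variable {α : Type*} [LinearOrder α] {n : ℕ}

theorem comp_perm_eq_self_of_monotone {f : Fin n → α} {σ : Equiv.Perm (Fin n)} (hf : Monotone f)
    (hfσ : Monotone (f ∘ σ)) : f ∘ σ = f := by
  rw [comp_sort_eq_comp_iff_monotone.2 hfσ, sort_eq_refl_iff_monotone.2 hf]
  rfl

def permOrbit (f : Fin n → α) : Finset (Fin n → α) :=
  Finset.univ.image fun σ : Equiv.Perm (Fin n) => f ∘ σ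

theorem mem_permOrbit {f g : Fin n → α} :
    g ∈ permOrbit f ↔ ∃ σ : Equiv.Perm (Fin n), f ∘ σ = g := by
  simp [permOrbit]

theorem comp_mem_permOrbit_iff {f g : Fin n → α} (σ : Equiv.Perm (Fin n)) :
    g ∘ σ ∈ permOrbit f ↔ g ∈ permOrbit f := by
  simp only [mem_permOrbit]
  constructor
  · rintro ⟨τ, hτ⟩
    exact ⟨τ * σ⁻¹, by rw [Equiv.Perm.coe_mul, ← Function.comp_assoc, hτ]; ext; simp⟩
  · rintro ⟨τ, rfl⟩
    exact ⟨τ * σ, rfl⟩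

theorem eq_of_mem_permOrbit {f g : Fin n → α} (hf : Monotone f) (hg : Monotone g)
    (h : g ∈ permOrbit f) : g = f := by
  obtain ⟨σ, rfl⟩ := mem_permOrbit.1 h
  exact comp_perm_eq_self_of_monotone hf hg

end Tuple

abbrev BoundedSortedList (ι : Type*) [LinearOrder ι] (ℓ : ℕ) :=
  {l : List ι // l.Pairwise (· ≤ ·) ∧ l.length ≤ ℓ}

namespace BoundedSortedList

variable {ι : Type*} [LinearOrder ι] {ℓ : ℕ}

def toTuple (l : BoundedSortedList ι ℓ) : Fin ℓ → WithTop ι := fun i => l.1[(i : ℕ)]?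

theorem toTuple_of_lt (l : BoundedSortedList ι ℓ) {i : Fin ℓ} (hi : (i : ℕ) < l.1.length) :
    l.toTuple i = l.1[(i : ℕ)] := by
  rw [toTuple, List.getElem?_eq_getElem hi]
  rfl

theorem toTuple_of_le (l : BoundedSortedList ι ℓ) {i : Fin ℓ} (hi : l.1.length ≤ i) :
    l.toTuple i = ⊤ := by
  rw [toTuple, List.getElem?_eq_none hi]
  rfl

theorem toTuple_injective : Function.Injective (toTuple : BoundedSortedList ι ℓ → _) := by
  intro l l' h
  refine Subtype.ext (List.ext_getElem? fun n => ?_)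
  rcases lt_or_ge n ℓ with hn | hn
  · exact congrFun h ⟨n, hn⟩
  · rw [List.getElem?_eq_none (l.2.2.trans hn), List.getElem?_eq_none (l'.2.2.trans hn)]

theorem monotone_toTuple (l : BoundedSortedList ι ℓ) : Monotone l.toTuple := by
  intro i j hij
  rcases lt_or_ge (j : ℕ) l.1.length with hj | hj
  · rw [l.toTuple_of_lt hj, l.toTuple_of_lt (lt_of_le_of_lt hij hj)]
    exact WithTop.coe_le_coe.2 (l.2.1.rel_get_of_le hij)
  · rw [l.toTuple_of_le hj]
    exact le_top

theorem exists_toTuple_eq {g : Fin ℓ → WithTop ι} (hg : Monotone g) :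
    ∃ l : BoundedSortedList ι ℓ, l.toTuple = g := by
  induction ℓ with
  | zero => exact ⟨⟨[], .nil, le_rfl⟩, funext fun i => i.elim0⟩
  | succ n ih =>
    obtain ⟨l, hl⟩ := ih (hg.comp Fin.strictMono_succ.monotone)
    cases h0 : g 0 with
    | top =>
      refine ⟨⟨[], .nil, Nat.zero_le _⟩, funext fun i => ?_⟩
      rw [toTuple_of_le _ (Nat.zero_le _), eq_comm, ← top_le_iff, ← h0]
      exact hg (Fin.zero_le i)
    | coe a =>
      refine ⟨⟨a :: l.1, List.pairwise_cons.2 ⟨fun x hx => ?_, l.2.1⟩, Nat.succ_le_succ l.2.2⟩,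
        funext fun i => ?_⟩
      · obtain ⟨r, hr, rfl⟩ := List.getElem_of_mem hx
        have h := hg (Fin.zero_le (Fin.succ ⟨r, hr.trans_le l.2.2⟩))
        rwa [h0, ← Function.comp_apply (f := g), ← hl, toTuple_of_lt _ hr,
          WithTop.coe_le_coe] at h
      · cases i using Fin.cases with
        | zero => exact h0.symm
        | succ i => simpa [toTuple] using congrFun hl i

end BoundedSortedList

open PiTensorProduct

theorem PiTensorProduct.reindex_mul {R A ι ι₂ : Type*} [CommSemiring R] [Semiring A] [Algebra R A]
    (σ : ι ≃ ι₂) (x y : ⨂[R] _ : ι, A) :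
    reindex R (fun _ => A) σ (x * y) = reindex R (fun _ => A) σ x * reindex R (fun _ => A) σ y := by
  induction x using PiTensorProduct.induction_on with
  | smul_tprod c f =>
    induction y using PiTensorProduct.induction_on with
    | smul_tprod d f' =>
      simp only [smul_mul_assoc, mul_smul_comm, map_smul, tprod_mul_tprod, reindex_tprod]
      rfl
    | add y y' hy hy' => simp only [mul_add, map_add, hy, hy']
  | add x x' hx hx' => simp only [add_mul, map_add, hx, hx']

theorem Module.Basis.piTensorProduct_repr_reindex {R M κ ι : Type*} [CommSemiring R]
    [AddCommMonoid M] [Module R M] [Fintype ι] (b : Basis κ R M) (σ : Equiv.Perm ι)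
    (x : ⨂[R] _ : ι, M) (g : ι → κ) :
    (Basis.piTensorProduct fun _ => b).repr (PiTensorProduct.reindex R (fun _ => M) σ x) g
      = (Basis.piTensorProduct fun _ => b).repr x (g ∘ σ) := by
  induction x using PiTensorProduct.induction_on with
  | smul_tprod c f =>
    simp only [map_smul, reindex_tprod, Basis.piTensorProduct_repr_tprod_apply,
      Finsupp.smul_apply]
    congr 1
    exact (Fintype.prod_equiv σ _ _ fun i => by simp).symm
  | add x y hx hy => simp only [map_add, Finsupp.add_apply, hx, hy]

def placement {M : Type*} [Monoid M] {j ℓ : ℕ} (v : Fin j → M) (t : Fin j → Fin ℓ) : Fin ℓ → M :=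
  (List.ofFn fun r => Pi.mulSingle (t r) (v r)).prod

section Placement

variable {M : Type*} [Monoid M] {j ℓ : ℕ} (v : Fin j → M) {t : Fin j → Fin ℓ}

theorem placement_apply (i : Fin ℓ) :
    placement v t i = (List.ofFn fun r => (Pi.mulSingle (t r) (v r) : Fin ℓ → M) i).prod := by
  rw [placement, Pi.list_prod_apply, List.map_ofFn]
  rfl

theorem placement_apply_of_notMem {i : Fin ℓ} (hi : i ∉ Set.range t) : placement v t i = 1 := by
  rw [placement_apply]
  refine List.prod_eq_one fun x hx => ?_
  obtain ⟨r, rfl⟩ := List.mem_ofFn.1 hx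
  exact Pi.mulSingle_eq_of_ne (fun h => hi ⟨r, h.symm⟩) _

theorem placement_apply_of_injective (ht : Function.Injective t) (r : Fin j) :
    placement v t (t r) = v r := by
  rw [placement_apply, List.prod_ofFn_eq_of_forall_ne _ r fun r' hr' =>
    Pi.mulSingle_eq_of_ne (ht.ne hr'.symm) _, Pi.mulSingle_eq_same]

end Placement

section SymmetricTensors

variable {k A : Type*} [Field k] [Ring A] [Algebra k A] {ℓ : ℕ}

theorem one_mem_tsSubmodule : (1 : ⨂[k] _ : Fin ℓ, A) ∈ tsSubmodule k A ℓ := fun σ => by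
  rw [PiTensorProduct.one_def, reindex_tprod]
  rfl

theorem mul_mem_tsSubmodule {x y : ⨂[k] _ : Fin ℓ, A} (hx : x ∈ tsSubmodule k A ℓ)
    (hy : y ∈ tsSubmodule k A ℓ) : x * y ∈ tsSubmodule k A ℓ := fun σ => by
  rw [PiTensorProduct.reindex_mul, hx σ, hy σ]

theorem symTen_eq_sum_tprod_mulSingle (a : A) :
    symTen k A ℓ a = ∑ i : Fin ℓ, tprod k (Pi.mulSingle i a) :=
  rfl

theorem symTen_mem_tsSubmodule (a : A) : symTen k A ℓ a ∈ tsSubmodule k A ℓ := fun σ => by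
  simp only [symTen_eq_sum_tprod_mulSingle, map_sum, reindex_tprod]
  refine Fintype.sum_equiv σ _ _ fun i => ?_
  congr 1
  funext j
  simp [Pi.mulSingle_apply, Equiv.symm_apply_eq]

theorem list_prod_symTen_mem_tsSubmodule {α : Type*} (l : List α) (f : α → A) :
    (l.map fun x => symTen k A ℓ (f x)).prod ∈ tsSubmodule k A ℓ :=
  List.prod_induction _ (fun _ _ => mul_mem_tsSubmodule) one_mem_tsSubmodule
    fun x hx => by obtain ⟨a, -, rfl⟩ := List.mem_map.1 hx; exact symTen_mem_tsSubmodule (f a)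

theorem mem_tsSubmodule_iff_repr_comp_perm {κ : Type*} (b : Basis κ k A)
    {x : ⨂[k] _ : Fin ℓ, A} :
    x ∈ tsSubmodule k A ℓ ↔ ∀ (g : Fin ℓ → κ) (σ : Equiv.Perm (Fin ℓ)),
      (Basis.piTensorProduct fun _ => b).repr x (g ∘ σ)
        = (Basis.piTensorProduct fun _ => b).repr x g := by
  refine ⟨fun hx g σ => ?_, fun h σ => ?_⟩
  · rw [← Basis.piTensorProduct_repr_reindex, hx σ]
  · exact (Basis.piTensorProduct fun _ => b).ext_elem fun g => by
      rw [Basis.piTensorProduct_repr_reindex, h]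

theorem prod_ofFn_symTen {j : ℕ} (v : Fin j → A) :
    (List.ofFn fun r => symTen k A ℓ (v r)).prod
      = ∑ t : Fin j → Fin ℓ, tprod k (placement v t) := by
  simp only [symTen_eq_sum_tprod_mulSingle, List.prod_ofFn_sum]
  refine Finset.sum_congr rfl fun t _ => ?_
  rw [placement, ← tprodMonoidHom_apply, map_list_prod, List.map_ofFn]
  rfl

variable {ι : Type*} [LinearOrder ι] (e : Basis (WithTop ι) k A)

theorem eq_of_repr_toTuple_eq {x y : ⨂[k] _ : Fin ℓ, A} (hx : x ∈ tsSubmodule k A ℓ)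
    (hy : y ∈ tsSubmodule k A ℓ)
    (h : ∀ l : BoundedSortedList ι ℓ, (Basis.piTensorProduct fun _ => e).repr x l.toTuple
      = (Basis.piTensorProduct fun _ => e).repr y l.toTuple) : x = y :=
  (Basis.piTensorProduct fun _ => e).ext_elem fun g => by
    obtain ⟨l, hl⟩ := BoundedSortedList.exists_toTuple_eq (Tuple.monotone_sort g)
    rw [← (mem_tsSubmodule_iff_repr_comp_perm e).1 hx g (Tuple.sort g),
      ← (mem_tsSubmodule_iff_repr_comp_perm e).1 hy g (Tuple.sort g), ← hl, h]

noncomputable def orbitSum (l : BoundedSortedList ι ℓ) : ⨂[k] _ : Fin ℓ, A :=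
  ∑ g ∈ Tuple.permOrbit l.toTuple, Basis.piTensorProduct (fun _ => e) g

theorem repr_orbitSum (l : BoundedSortedList ι ℓ) (g : Fin ℓ → WithTop ι) :
    (Basis.piTensorProduct fun _ => e).repr (orbitSum e l) g
      = if g ∈ Tuple.permOrbit l.toTuple then 1 else 0 := by
  simp only [orbitSum, map_sum, Finsupp.coe_finsetSum, Finset.sum_apply, Basis.repr_self,
    Finsupp.single_apply, Finset.sum_ite_eq']

theorem orbitSum_mem_tsSubmodule (l : BoundedSortedList ι ℓ) : orbitSum e l ∈ tsSubmodule k A ℓ :=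
  (mem_tsSubmodule_iff_repr_comp_perm e).2 fun g σ => by
    simp only [repr_orbitSum, Tuple.comp_mem_permOrbit_iff]

theorem repr_orbitSum_toTuple (l l' : BoundedSortedList ι ℓ) :
    (Basis.piTensorProduct fun _ => e).repr (orbitSum e l) l'.toTuple
      = if l' = l then 1 else 0 := by
  rw [repr_orbitSum]
  refine if_congr ⟨fun h => BoundedSortedList.toTuple_injective ?_, fun h => ?_⟩ rfl rfl
  · exact Tuple.eq_of_mem_permOrbit l.monotone_toTuple l'.monotone_toTuple h
  · exact h ▸ Tuple.mem_permOrbit.2 ⟨1, rfl⟩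

theorem dualBases_orbitSum :
    Module.DualBases
      (fun l : BoundedSortedList ι ℓ =>
        (⟨orbitSum e l, orbitSum_mem_tsSubmodule e l⟩ : tsSubmodule k A ℓ))
      (fun l => ((Basis.piTensorProduct fun _ => e).coord l.toTuple).comp
        (tsSubmodule k A ℓ).subtype) where
  eval_same l := by simp [repr_orbitSum_toTuple]
  eval_of_ne l l' h := by simp [repr_orbitSum_toTuple, h]
  total h := Subtype.ext (eq_of_repr_toTuple_eq e (Subtype.prop _) (Subtype.prop _) h)
  finite x := (((Basis.piTensorProduct fun _ => e).repr x).support.finite_toSet.preimage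
    BoundedSortedList.toTuple_injective.injOn).subset fun l hl => by simpa using hl

noncomputable def orbitSumBasis : Basis (BoundedSortedList ι ℓ) k (tsSubmodule k A ℓ) :=
  (dualBases_orbitSum e).basis

theorem orbitSumBasis_repr_apply (x : tsSubmodule k A ℓ) (l : BoundedSortedList ι ℓ) :
    (orbitSumBasis e).repr x l = (Basis.piTensorProduct fun _ => e).repr x l.toTuple := by
  simp [orbitSumBasis]

end SymmetricTensors

section ProductsOfSymmetrizations

variable {k A : Type*} [Field k] [Ring A] [Algebra k A] {ℓ : ℕ} {ι : Type*} [LinearOrder ι]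
  (e : Basis (WithTop ι) k A)

theorem mem_range_of_placement_eq (he1 : e ⊤ = 1) {j : ℕ} {v : Fin j → A} {t : Fin j → Fin ℓ}
    {l : BoundedSortedList ι ℓ} (h : placement v t = e ∘ l.toTuple) {i : Fin ℓ}
    (hi : (i : ℕ) < l.1.length) : i ∈ Set.range t := by
  by_contra hit
  have hei := congrFun h i
  rw [placement_apply_of_notMem v hit, Function.comp_apply, l.toTuple_of_lt hi, ← he1] at hei
  exact WithTop.coe_ne_top (e.injective hei).symm

theorem placement_castLE (he1 : e ⊤ = 1) (l : BoundedSortedList ι ℓ) :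
    placement (fun r => e l.1[r]) (Fin.castLE l.2.2) = e ∘ l.toTuple := by
  funext i
  by_cases hi : (i : ℕ) < l.1.length
  · rw [Function.comp_apply, l.toTuple_of_lt hi]
    exact placement_apply_of_injective _ (Fin.castLE_injective l.2.2) ⟨i, hi⟩
  · rw [placement_apply_of_notMem _ fun ⟨r, hr⟩ => hi (hr ▸ r.2), Function.comp_apply,
      l.toTuple_of_le (not_lt.1 hi), he1]

open scoped Classical in
theorem repr_tprod_placement (he1 : e ⊤ = 1) {l l' : BoundedSortedList ι ℓ}
    (hlen : l.1.length ≤ l'.1.length) (t : Fin l.1.length → Fin ℓ) :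
    (Basis.piTensorProduct fun _ => e).repr (tprod k (placement (fun r => e l.1[r]) t))
        l'.toTuple
      = if placement (fun r => e l.1[r]) t = e ∘ l'.toTuple then 1 else 0 := by
  set v : Fin l.1.length → A := fun r => e l.1[r]
  by_cases hcov : ∀ i : Fin ℓ, (i : ℕ) < l'.1.length → i ∈ Set.range t
  · obtain ⟨-, hinj, -⟩ := Fin.injective_of_forall_lt_mem_range hlen l'.2.2 hcov
    have hbasis : ∀ i, ∃ κ, placement v t i = e κ := by
      intro i
      by_cases hi : i ∈ Set.range t
      · obtain ⟨r, rfl⟩ := hi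
        exact ⟨_, placement_apply_of_injective v hinj r⟩
      · exact ⟨⊤, by rw [placement_apply_of_notMem v hi, he1]⟩
    choose f hf using hbasis
    rw [funext hf, ← Basis.piTensorProduct_apply, Basis.repr_self, Finsupp.single_apply]
    exact if_congr (e.injective.comp_left.eq_iff).symm rfl rfl
  · push Not at hcov
    obtain ⟨i, hi, hit⟩ := hcov
    rw [if_neg fun h => hit (mem_range_of_placement_eq e he1 h hi),
      Basis.piTensorProduct_repr_tprod_apply]
    refine Finset.prod_eq_zero (Finset.mem_univ i) ?_
    rw [placement_apply_of_notMem v hit, ← he1, Basis.repr_self, l'.toTuple_of_lt hi,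
      Finsupp.single_eq_of_ne WithTop.coe_ne_top]

open Finset Classical in
theorem repr_prod_symTen (he1 : e ⊤ = 1) {l l' : BoundedSortedList ι ℓ}
    (hlen : l.1.length ≤ l'.1.length) :
    (Basis.piTensorProduct fun _ => e).repr (l.1.map fun i : ι => symTen k A ℓ (e i)).prod
        l'.toTuple
      = #{t | placement (fun r => e l.1[r]) t = e ∘ l'.toTuple} := by
  rw [← List.ofFn_getElem_eq_map, prod_ofFn_symTen, map_sum, Finsupp.coe_finsetSum,
    Finset.sum_apply]
  exact (Finset.sum_congr rfl fun t _ => repr_tprod_placement e he1 hlen t).trans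
    (Finset.sum_boole _ _)

theorem repr_prod_symTen_self [CharZero k] (he1 : e ⊤ = 1) (l : BoundedSortedList ι ℓ) :
    (Basis.piTensorProduct fun _ => e).repr (l.1.map fun i : ι => symTen k A ℓ (e i)).prod
      l.toTuple ≠ 0 := by
  classical
  rw [repr_prod_symTen e he1 le_rfl, Nat.cast_ne_zero]
  exact Finset.card_ne_zero_of_mem
    (Finset.mem_filter.2 ⟨Finset.mem_univ _, placement_castLE e he1 l⟩)

open Finset Classical in
theorem repr_prod_symTen_of_ne (he1 : e ⊤ = 1) {l l' : BoundedSortedList ι ℓ}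
    (hlen : l.1.length ≤ l'.1.length) (hne : l ≠ l') :
    (Basis.piTensorProduct fun _ => e).repr (l.1.map fun i : ι => symTen k A ℓ (e i)).prod
      l'.toTuple = 0 := by
  suffices h : ({t | placement (fun r => e l.1[r]) t = e ∘ l'.toTuple} :
      Finset (Fin l.1.length → Fin ℓ)) = ∅ by
    rw [repr_prod_symTen e he1 hlen, h, card_empty, Nat.cast_zero]
  refine filter_eq_empty_iff.2 fun t _ ht => ?_
  obtain ⟨hj, hinj, hlt⟩ := Fin.injective_of_forall_lt_mem_range hlen l'.2.2
    fun i hi => mem_range_of_placement_eq e he1 ht hi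
  let φ : Fin l.1.length → Fin l'.1.length := fun r => ⟨t r, hlt r⟩
  have hφ : φ.Bijective := (Fintype.bijective_iff_injective_and_card φ).2
    ⟨fun r r' h => hinj (Fin.ext (Fin.mk.inj_iff.1 h)), by simp [hj]⟩
  refine hne (Subtype.ext (List.eq_of_pairwise_of_get_comp_equiv l.2.1 l'.2.1
    (Equiv.ofBijective φ hφ) fun r => ?_))
  have htr := congrFun ht (t r)
  rw [placement_apply_of_injective _ hinj, Function.comp_apply, l'.toTuple_of_lt (hlt r)] at htr
  exact (WithTop.coe_injective (e.injective htr)).symm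

end ProductsOfSymmetrizations

theorem ts_basis_of_sorted_products_general (k A : Type*) [Field k] [CharZero k] [Ring A] [Algebra k A]
    (ℓ : ℕ) (ι : Type*) [LinearOrder ι] (b : ι → A)
    (e : Module.Basis (Option ι) k A) (he1 : e none = 1) (heb : ∀ i, e (some i) = b i) :
    ∃ Bs : Module.Basis {l : List ι // l.Pairwise (· ≤ ·) ∧ l.length ≤ ℓ} k
        (tsSubmodule k A ℓ),
      ∀ l, (Bs l : ⨂[k] _ : Fin ℓ, A) =
        (l.val.map (fun i => symTen k A ℓ (b i))).prod := by
  obtain rfl : b = fun i => e (some i) := funext fun i => (heb i).symm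
  -- `WithTop ι` is `Option ι`, with `⊤ = none`.
  let e' : Basis (WithTop ι) k A := e
  obtain ⟨Bs, hBs⟩ := (orbitSumBasis e').exists_basis_eq_of_triangular
    (deg := fun l : BoundedSortedList ι ℓ => l.1.length)
    (v := fun l => ⟨_, list_prod_symTen_mem_tsSubmodule l.1 fun i => e' i⟩)
    (fun l => by
      rw [orbitSumBasis_repr_apply]
      exact repr_prod_symTen_self e' he1 l)
    (fun l l' hne hlen => by
      rw [orbitSumBasis_repr_apply]
      exact repr_prod_symTen_of_ne e' he1 hlen hne)
  exact ⟨Bs, fun l => by rw [hBs]; rfl⟩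

/-- if `{1_A} ∪ B` is a basis of the vector space `A` (here `B` is given as the
injective image of a linearly ordered index type `ι`, the basis being indexed by `Option ι` with
`none ↦ 1_A`), then the family consisting of `1_A^{⊗ℓ}` (the empty product, i.e. the identity of
`A^{⊗ℓ}`) together with the products `sym_ℓ(b_1)⋯sym_ℓ(b_j)` over nondecreasing tuples
`b_1 ≤ ⋯ ≤ b_j` of elements of `B` with `1 ≤ j ≤ ℓ`, is a basis of `TS^ℓ(A)`. -/
theorem ts_basis_of_sorted_products (k A : Type*) [Field k] [CharZero k] [Ring A] [Algebra k A]
    (ℓ : ℕ) (hℓ : 0 < ℓ) (ι : Type*) [LinearOrder ι] (b : ι → A)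
    (e : Module.Basis (Option ι) k A) (he1 : e none = 1) (heb : ∀ i, e (some i) = b i) :
    ∃ Bs : Module.Basis {l : List ι // l.Pairwise (· ≤ ·) ∧ l.length ≤ ℓ} k
        (tsSubmodule k A ℓ),
      ∀ l, (Bs l : ⨂[k] _ : Fin ℓ, A) =
        (l.val.map (fun i => symTen k A ℓ (b i))).prod :=
  ts_basis_of_sorted_products_general k A ℓ ι b e he1 heb
end

section
/- The symmetrization map sym_ℓ : A → TS^ℓ(A) satisfies the (ℓ+1)-st symmetric identity, i.e. Σ_p sgn(C(p))·|C(p)|·sym_ℓ(a)^{p_1}·sym_ℓ(a^2)^{p_2}⋯sym_ℓ(a^{ℓ+1})^{p_{ℓ+1}} = 0 for all a ∈ A, the sum over partitions p = (p_1,…,p_{ℓ+1}) of ℓ+1 (with p_1 + 2p_2 + ⋯ + (ℓ+1)p_{ℓ+1} = ℓ+1), where C(p) is the conjugacy class of S_{ℓ+1} with cycle type p. Moreover sym_ℓ(1_A) = ℓ·1_{TS^ℓ(A)}. -/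
open PiTensorProduct
open scoped TensorProduct

/-- The number of cycles of length `j` (including fixed points, i.e. `1`-cycles) of a
permutation `σ` of `Fin m`; for a permutation in the conjugacy class `C(p)` of cycle type the
partition `p = (p_1,…,p_m)` this is `p_j`. -/
def cycleCount {m : ℕ} (σ : Equiv.Perm (Fin m)) (j : ℕ) : ℕ :=
  (σ.cycleType + Multiset.replicate (m - σ.cycleType.sum) 1).count j

/-- The left-hand side `Σ_p sgn(C(p))·|C(p)|·ρ(a)^{p_1}·ρ(a^2)^{p_2}⋯ρ(a^m)^{p_m}` of the
`m`-th symmetric identity, rewritten as the sum over all permutations `σ ∈ S_m` of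
`sgn(σ)·∏_j ρ(a^j)^{p_j(σ)}` where `p_j(σ)` is the number of `j`-cycles of `σ` (summing over
each conjugacy class `C(p)` contributes the term `sgn(C(p))·|C(p)|·∏_j ρ(a^j)^{p_j}`). -/
noncomputable def symIdentLHS {A B : Type*} [Ring A] [Ring B] (ρ : A → B) (m : ℕ) (a : A) : B :=
  ∑ σ : Equiv.Perm (Fin m), (Equiv.Perm.sign σ : ℤ) •
    ((List.range m).map (fun j => ρ (a ^ (j + 1)) ^ cycleCount σ (j + 1))).prod

/-!
In a commutative ring, with `p n = ∑ i, y i ^ n` the power sums of `y : ι → R`, expanding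
`∏ p |c|` over the cycles `c` of `σ` (fixed points included) gives the sum of `∏ t, y (g t)` over
the colourings `g` with `g ∘ σ = g`. Exchanging the sums over `σ` and `g`, each colouring comes
with the sum of the signs of its stabiliser, which vanishes as soon as `g` is not injective:
multiplying by the transposition of two points of the same colour reverses the sign. When
`card ι < card α` no colouring is injective, so `∑ σ, sign σ • ∏_c p |c| = 0`.

`sym_ℓ(a ^ n)` is the `n`-th power sum of the pairwise commuting elements
`1 ⊗ ⋯ ⊗ a ⊗ ⋯ ⊗ 1`, so the identity holds in the commutative subring they generate.
-/

open Equiv Finset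

theorem Setoid.sum_prod_comp_mk_eq_prod_sum_pow_card {α ι R : Type*} [Fintype α] [Fintype ι]
    [CommSemiring R] (s : Setoid α) [DecidableRel s.r] (y : ι → R) :
    ∑ f : Quotient s → ι, ∏ a, y (f ⟦a⟧) = ∏ q : Quotient s, ∑ i, y i ^ #{a | ⟦a⟧ = q} := by
  classical
  rw [prod_univ_sum, Fintype.piFinset_univ]
  refine Fintype.sum_congr _ _ fun f => ?_
  rw [← prod_fiberwise univ (fun a => (⟦a⟧ : Quotient s))]
  refine Fintype.prod_congr _ _ fun q => ?_
  rw [prod_congr rfl fun a ha => by rw [(mem_filter.mp ha).2], prod_const]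

namespace Equiv.Perm

variable {α : Type*}

theorem mk_eq_mk_iff_sameCycle {σ : Perm α} {a b : α} :
    (⟦a⟧ : Quotient (SameCycle.setoid σ)) = ⟦b⟧ ↔ σ.SameCycle a b :=
  Quotient.eq

theorem sameCycle_out_mk (σ : Perm α) (x : α) :
    σ.SameCycle (⟦x⟧ : Quotient (SameCycle.setoid σ)).out x :=
  mk_eq_mk_iff_sameCycle.mp (Quotient.out_eq _)

theorem SameCycle.apply_eq_of_comp_eq [Finite α] {β : Type*} {σ : Perm α} {g : α → β}
    (hg : g ∘ σ = g) {a b : α} (h : σ.SameCycle a b) : g a = g b := by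
  obtain ⟨n, rfl⟩ := h.exists_nat_pow_eq
  clear h
  induction n with
  | zero => rfl
  | succ n ih => rw [ih, pow_succ', mul_apply]; exact (congrFun hg _).symm

variable [Fintype α] [DecidableEq α]

instance (σ : Perm α) : DecidableRel (SameCycle.setoid σ).r :=
  inferInstanceAs (DecidableRel σ.SameCycle)

theorem filter_mk_eq_mk_of_mem_support {σ : Perm α} {x : α} (hx : x ∈ σ.support) :
    ({a | (⟦a⟧ : Quotient (SameCycle.setoid σ)) = ⟦x⟧} : Finset α) = (σ.cycleOf x).support := by
  ext a
  rw [mem_filter, mem_support_cycleOf_iff, mk_eq_mk_iff_sameCycle, sameCycle_comm]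
  simp [hx]

theorem filter_mk_eq_mk_of_notMem_support {σ : Perm α} {x : α} (hx : x ∉ σ.support) :
    ({a | (⟦a⟧ : Quotient (SameCycle.setoid σ)) = ⟦x⟧} : Finset α) = {x} := by
  ext a
  simp only [mem_filter, mem_univ, true_and, mem_singleton, mk_eq_mk_iff_sameCycle]
  exact ⟨fun h => (h.symm.eq_of_left (notMem_support.mp hx)).symm,
    fun h => h ▸ SameCycle.refl σ a⟩

theorem prod_quotient_sameCycle_eq_prod_map_partition {M : Type*} [CommMonoid M] (σ : Perm α)
    (f : ℕ → M) :
    ∏ q : Quotient (SameCycle.setoid σ), f #{a | ⟦a⟧ = q} = (σ.partition.parts.map f).prod := by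
  rw [parts_partition, Multiset.map_add, Multiset.prod_add, cycleType_def, Multiset.map_map,
    Multiset.map_replicate, Multiset.prod_replicate,
    ← prod_filter_mul_prod_filter_not univ (fun q => q.out ∈ σ.support)]
  congr 1
  · refine prod_bij (fun q _ => σ.cycleOf q.out) ?_ ?_ ?_ ?_
    · intro q hq
      exact cycleOf_mem_cycleFactorsFinset_iff.mpr (mem_filter.mp hq).2
    · intro q hq q' hq' h
      have hmem : q'.out ∈ (σ.cycleOf q.out).support := by
        rw [h, mem_support_cycleOf_iff]
        exact ⟨SameCycle.refl σ _, (mem_filter.mp hq').2⟩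
      rw [← q.out_eq, ← q'.out_eq, mk_eq_mk_iff_sameCycle]
      exact (mem_support_cycleOf_iff.mp hmem).1
    · intro c hc
      obtain ⟨x, hx⟩ := (mem_cycleFactorsFinset_iff.mp hc).1.nonempty_support
      have hxσ : x ∈ σ.support := mem_cycleFactorsFinset_support_le hc hx
      have hout := sameCycle_out_mk σ x
      refine ⟨⟦x⟧, mem_filter.mpr ⟨mem_univ _, hout.mem_support_iff.mpr hxσ⟩, ?_⟩
      rw [cycle_is_cycleOf hx hc, hout.cycleOf_eq]
    · intro q hq
      conv_lhs => rw [← q.out_eq]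
      rw [filter_mk_eq_mk_of_mem_support (mem_filter.mp hq).2]
      rfl
  · rw [← card_compl, ← prod_const]
    refine prod_nbij' (·.out) (⟦·⟧) ?_ ?_ ?_ ?_ ?_
    · intro q hq
      simpa using hq
    · intro x hx
      exact mem_filter.mpr
        ⟨mem_univ _, (sameCycle_out_mk σ x).mem_support_iff.not.mpr (mem_compl.mp hx)⟩
    · intro q _
      exact q.out_eq
    · intro x hx
      exact ((sameCycle_out_mk σ x).symm.eq_of_left (notMem_support.mp (mem_compl.mp hx))).symm
    · intro q hq
      conv_lhs => rw [← q.out_eq]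
      rw [filter_mk_eq_mk_of_notMem_support (by simpa using hq), card_singleton]

theorem sum_filter_comp_eq_self {ι M : Type*} [Fintype ι] [DecidableEq ι] [AddCommMonoid M]
    (σ : Perm α) (F : (α → ι) → M) :
    ∑ g : α → ι with g ∘ σ = g, F g =
      ∑ f : Quotient (SameCycle.setoid σ) → ι, F (f ∘ (⟦·⟧)) := by
  have hout {g : α → ι} (hg : g ∘ σ = g) :
      (fun q : Quotient (SameCycle.setoid σ) => g q.out) ∘ (⟦·⟧) = g :=
    funext fun a => (Quotient.mk_out (s := SameCycle.setoid σ) a).apply_eq_of_comp_eq hg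
  refine sum_nbij' (fun g q => g q.out) (· ∘ (⟦·⟧)) (by simp) ?_ ?_ ?_ ?_
  · intro f _
    simp only [mem_filter, mem_univ, true_and]
    exact funext fun a =>
      congrArg f (Quotient.sound (sameCycle_apply_left.mpr (SameCycle.refl σ a)))
  · intro g hg
    exact hout (mem_filter.mp hg).2
  · intro f _
    exact funext fun q => congrArg f q.out_eq
  · intro g hg
    rw [hout (mem_filter.mp hg).2]

theorem prod_partition_map_sum_pow_eq_sum_filter_comp_eq_self {ι R : Type*} [Fintype ι]
    [DecidableEq ι] [CommSemiring R] (σ : Perm α) (y : ι → R) :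
    (σ.partition.parts.map fun n => ∑ i, y i ^ n).prod =
      ∑ g : α → ι with g ∘ ⇑σ = g, ∏ a, y (g a) := by
  rw [sum_filter_comp_eq_self, ← prod_quotient_sameCycle_eq_prod_map_partition]
  exact (Setoid.sum_prod_comp_mk_eq_prod_sum_pow_card _ y).symm

theorem sum_sign_filter_comp_eq_self_eq_zero {ι : Type*} [DecidableEq ι] {g : α → ι}
    (hg : ¬ Function.Injective g) :
    ∑ σ ∈ ({σ | g ∘ ⇑σ = g} : Finset (Perm α)), (sign σ : ℤ) = 0 := by
  obtain ⟨i, j, hgij, hij⟩ := Function.not_injective_iff.mp hg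
  have hswap : g ∘ swap i j = g := by
    funext a
    rcases eq_or_ne a i with rfl | hai
    · simp [hgij]
    rcases eq_or_ne a j with rfl | haj
    · simp [hgij]
    · simp [swap_apply_of_ne_of_ne hai haj]
  have hneg : ∑ σ ∈ ({σ | g ∘ ⇑σ = g} : Finset (Perm α)), (sign σ : ℤ) =
      ∑ σ ∈ ({σ | g ∘ ⇑σ = g} : Finset (Perm α)), -(sign σ : ℤ) := by
    have hmem (σ : Perm α) : g ∘ ⇑(swap i j * σ) = g ↔ g ∘ ⇑σ = g := by
      rw [coe_mul, ← Function.comp_assoc, hswap]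
    refine sum_nbij' (swap i j * ·) (swap i j * ·) ?_ ?_ ?_ ?_ ?_
    · exact fun σ hσ => mem_filter.mpr ⟨mem_univ _, (hmem σ).mpr (mem_filter.mp hσ).2⟩
    · exact fun σ hσ => mem_filter.mpr ⟨mem_univ _, (hmem σ).mpr (mem_filter.mp hσ).2⟩
    · simp
    · simp
    · simp [sign_mul, sign_swap hij]
  rw [sum_neg_distrib] at hneg
  omega

theorem sum_sign_smul_prod_partition_map_sum_pow_eq_zero {ι R : Type*} [Fintype ι] [CommRing R]
    (y : ι → R) (h : Fintype.card ι < Fintype.card α) :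
    ∑ σ : Perm α, (sign σ : ℤ) • (σ.partition.parts.map fun n => ∑ i, y i ^ n).prod = 0 := by
  classical
  simp_rw [prod_partition_map_sum_pow_eq_sum_filter_comp_eq_self, smul_sum]
  rw [sum_comm' (t' := univ) (s' := fun g => {σ : Perm α | g ∘ ⇑σ = g}) (by simp)]
  refine sum_eq_zero fun g _ => ?_
  rw [← sum_smul, sum_sign_filter_comp_eq_self_eq_zero, zero_smul]
  exact fun hinj => (Fintype.card_le_of_injective g hinj).not_gt h

end Equiv.Perm

theorem list_prod_map_range_pow_cycleCount {M : Type*} [CommMonoid M] {m : ℕ}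
    (σ : Equiv.Perm (Fin m)) (f : ℕ → M) :
    ((List.range m).map fun j => f (j + 1) ^ cycleCount σ (j + 1)).prod =
      (σ.partition.parts.map f).prod := by
  have hcount (n : ℕ) : cycleCount σ n = σ.partition.parts.count n := by
    rw [cycleCount, Equiv.Perm.parts_partition, Equiv.Perm.sum_cycleType, Fintype.card_fin]
  have hlist : ((List.range m).map fun j => f (j + 1) ^ cycleCount σ (j + 1)).prod =
      ∏ j ∈ range m, f (j + 1) ^ cycleCount σ (j + 1) := by
    rw [prod_eq_multiset_prod]
    rfl
  rw [hlist, range_eq_Ico, prod_Ico_add' (fun n => f n ^ cycleCount σ n), zero_add,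
    prod_multiset_map_count]
  simp_rw [hcount]
  refine (prod_subset (fun n hn => ?_) fun n _ hn => ?_).symm
  · have hmem := Multiset.mem_toFinset.mp hn
    have hpos := σ.partition.parts_pos hmem
    have hle := σ.partition.le_of_mem_parts hmem
    rw [Fintype.card_fin] at hle
    rw [mem_Ico]
    omega
  · rw [Multiset.count_eq_zero.mpr (Multiset.mem_toFinset.not.mp hn), pow_zero]

open scoped IsMulCommutative in
theorem symIdentLHS_eq_zero_of_apply_pow_eq_sum_pow {A B ι : Type*} [Ring A] [Ring B] [Fintype ι]
    {ρ : A → B} {a : A} (x : ι → B) (hx : ∀ i j, Commute (x i) (x j))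
    (hρ : ∀ n, ρ (a ^ (n + 1)) = ∑ i, x i ^ (n + 1)) {m : ℕ} (hm : Fintype.card ι < m) :
    symIdentLHS ρ m a = 0 := by
  let S := Subring.closure (Set.range x)
  have : IsMulCommutative S := Subring.isMulCommutative_closure <| by
    rintro _ ⟨i, rfl⟩ _ ⟨j, rfl⟩
    exact hx i j
  let y : ι → S := fun i => ⟨x i, Subring.subset_closure ⟨i, rfl⟩⟩
  have hy (n : ℕ) : ρ (a ^ (n + 1)) = S.subtype (∑ i, y i ^ (n + 1)) := by
    simp [hρ, y]
  have key := Equiv.Perm.sum_sign_smul_prod_partition_map_sum_pow_eq_zero y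
    (α := Fin m) (by simpa using hm)
  simp_rw [← list_prod_map_range_pow_cycleCount] at key
  calc symIdentLHS ρ m a = S.subtype (∑ σ : Equiv.Perm (Fin m), (Equiv.Perm.sign σ : ℤ) •
        ((List.range m).map fun j => (∑ i, y i ^ (j + 1)) ^ cycleCount σ (j + 1)).prod) := by
        simp [symIdentLHS, hy, List.map_map, Function.comp_def]
    _ = 0 := by rw [key, map_zero]

namespace PiTensorProduct

theorem commute_singleAlgHom {ι R : Type*} {A : ι → Type*} [CommSemiring R]
    [∀ i, Semiring (A i)] [∀ i, Algebra R (A i)] [DecidableEq ι] {i j : ι} (hij : i ≠ j)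
    (a : A i) (b : A j) : Commute (singleAlgHom (R := R) i a) (singleAlgHom j b) :=
  (Pi.mulSingle_commute hij a b).tprod

end PiTensorProduct

theorem symTen_eq_sum_singleAlgHom (k A : Type*) [Field k] [Ring A] [Algebra k A] (ℓ : ℕ)
    (a : A) :
    symTen k A ℓ a = ∑ i, singleAlgHom (R := k) (A := fun _ => A) i a :=
  rfl

theorem symTen_satisfies_symmetric_identity_general (k A : Type*) [Field k] [Ring A]
    [Algebra k A] (ℓ : ℕ) :
    (∀ a : A, symIdentLHS (symTen k A ℓ) (ℓ + 1) a = 0) ∧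
    symTen k A ℓ (1 : A) = ℓ • (1 : ⨂[k] _ : Fin ℓ, A) := by
  refine ⟨fun a => ?_, by simp only [symTen_eq_sum_singleAlgHom, map_one, sum_const, card_univ,
    Fintype.card_fin]⟩
  refine symIdentLHS_eq_zero_of_apply_pow_eq_sum_pow
    (fun i => singleAlgHom (R := k) (A := fun _ => A) i a) (fun i j => ?_)
    (fun n => by simp only [symTen_eq_sum_singleAlgHom, map_pow]) (by simp)
  rcases eq_or_ne i j with rfl | hij
  · exact Commute.refl _
  · exact commute_singleAlgHom (R := k) (A := fun _ => A) hij a a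

/-- the symmetrization map `sym_ℓ : A → TS^ℓ(A)` satisfies the `(ℓ+1)`-st
symmetric identity, and `sym_ℓ(1_A) = ℓ·1`. -/
theorem symTen_satisfies_symmetric_identity (k A : Type*) [Field k] [CharZero k] [Ring A]
    [Algebra k A] (ℓ : ℕ) (hℓ : 0 < ℓ) :
    (∀ a : A, symIdentLHS (symTen k A ℓ) (ℓ + 1) a = 0) ∧
    symTen k A ℓ (1 : A) = ℓ • (1 : ⨂[k] _ : Fin ℓ, A) :=
  symTen_satisfies_symmetric_identity_general k A ℓ
end

section
/- Every diagonal matrix of Mat_{2n}(k) (k a field of characteristic 0 with more than 2n+1 elements) lies in the subalgebra A_∘ of Mat_{2n}(k) generated by all unital subalgebras isomorphic to Mat_2(k); consequently, since A_∘ is invariant under conjugation by GL_{2n}(k), A_∘ = Mat_{2n}(k). -/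
/-!
For any splitting `ι ≃ m × κ` of the index set, `x ↦ x ⊗ 1_κ` embeds `Mat_m(R)` into
`Mat_ι(R)`, so its image is one of the subalgebras in the supremum. Multiplying the image of
`E_ij` by the image of the diagonal idempotent `E_jj` under a second splitting, which agrees
with the first on one block `c` and swaps `j` with some `j' ≠ j` on all others, cuts out the
single matrix unit `E_(i,c),(j,c)`. As the splitting can be chosen to send `(i, c)` and `(j, c)`
to any prescribed pair of indices, every matrix unit, hence every matrix, lies in the
supremum.
-/

theorem Equiv.Perm.exists_apply_eq_and_apply_eq {α : Type*} [DecidableEq α] {x y a b : α}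
    (h : x = y ↔ a = b) : ∃ σ : Equiv.Perm α, σ x = a ∧ σ y = b := by
  refine ⟨(Equiv.swap x a).trans (Equiv.swap (Equiv.swap x a y) b), ?_, by simp⟩
  by_cases hab : a = b
  · subst hab
    simp [h.mpr rfl]
  · have hxy : x ≠ y := fun hxy => hab (h.mp hxy)
    simp only [Equiv.trans_apply, Equiv.swap_apply_left]
    refine Equiv.swap_apply_of_ne_of_ne ?_ hab
    rw [Ne, eq_comm, Equiv.swap_apply_eq_iff, Equiv.swap_apply_right]
    exact hxy.symm

namespace Matrix

def blockFlip {m κ : Type*} [DecidableEq m] [DecidableEq κ] (c : κ) (j j' : m) :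
    Equiv.Perm (m × κ) :=
  Equiv.prodCongrLeft fun t => if t = c then Equiv.refl m else Equiv.swap j j'

theorem blockFlip_apply {m κ : Type*} [DecidableEq m] [DecidableEq κ] (c : κ) (j j' q : m)
    (t : κ) :
    blockFlip c j j' (q, t) = (if t = c then q else Equiv.swap j j' q, t) := by
  by_cases ht : t = c <;> simp [blockFlip, ht]

variable (R : Type*) [CommSemiring R] {m κ ι : Type*} [Fintype m] [DecidableEq m]
  [Fintype κ] [DecidableEq κ] [Fintype ι] [DecidableEq ι]

variable (m ι) in
noncomputable def supMatrixCopies : Subalgebra R (Matrix ι ι R) :=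
  ⨆ (S : Subalgebra R (Matrix ι ι R)) (_ : Nonempty (S ≃ₐ[R] Matrix m m R)), S

theorem range_le_supMatrixCopies {φ : Matrix m m R →ₐ[R] Matrix ι ι R}
    (hφ : Function.Injective φ) : φ.range ≤ supMatrixCopies R m ι :=
  le_iSup₂_of_le φ.range ⟨(AlgEquiv.ofInjective φ hφ).symm⟩ le_rfl

noncomputable def kroneckerOneAlgHom (e : m × κ ≃ ι) : Matrix m m R →ₐ[R] Matrix ι ι R :=
  (reindexAlgEquiv R R e).toAlgHom.comp
    ((kroneckerAlgEquiv m κ R).toAlgHom.comp Algebra.TensorProduct.includeLeft)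

theorem kroneckerOneAlgHom_apply_apply (e : m × κ ≃ ι) (x : Matrix m m R) (p q : m × κ) :
    kroneckerOneAlgHom R e x (e p) (e q) = if p.2 = q.2 then x p.1 q.1 else 0 := by
  simp [kroneckerOneAlgHom, one_apply]

theorem kroneckerOneAlgHom_injective [Nonempty κ] (e : m × κ ≃ ι) :
    Function.Injective (kroneckerOneAlgHom R e) := by
  intro x y hxy
  obtain ⟨c⟩ := ‹Nonempty κ›
  ext i j
  simpa [kroneckerOneAlgHom_apply_apply] using congr_fun₂ hxy (e (i, c)) (e (j, c))

theorem kroneckerOneAlgHom_mem_supMatrixCopies [Nonempty κ] (e : m × κ ≃ ι)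
    (x : Matrix m m R) :
    kroneckerOneAlgHom R e x ∈ supMatrixCopies R m ι :=
  range_le_supMatrixCopies R (kroneckerOneAlgHom_injective R e) ⟨x, rfl⟩

theorem kroneckerOneAlgHom_single_self (e : m × κ ≃ ι) (j : m) :
    kroneckerOneAlgHom R e (single j j 1) =
      diagonal fun x => if (e.symm x).1 = j then 1 else 0 := by
  ext x y
  obtain ⟨p, rfl⟩ := e.surjective x
  obtain ⟨q, rfl⟩ := e.surjective y
  simp only [kroneckerOneAlgHom_apply_apply, diagonal_apply, single_apply, e.apply_eq_iff_eq,
    Prod.ext_iff, e.symm_apply_apply]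
  grind

/-- The `j`-th rows of `e` and of `(blockFlip c j j').symm.trans e` meet only in `(j, c)`. -/
theorem kroneckerOneAlgHom_single_mul_single (e : m × κ ≃ ι) (c : κ) (i : m) {j j' : m}
    (hj : j ≠ j') :
    kroneckerOneAlgHom R e (single i j 1) *
        kroneckerOneAlgHom R ((blockFlip c j j').symm.trans e) (single j j 1) =
      single (e (i, c)) (e (j, c)) 1 := by
  rw [kroneckerOneAlgHom_single_self]
  ext x y
  obtain ⟨⟨p, s⟩, rfl⟩ := e.surjective x
  obtain ⟨⟨q, t⟩, rfl⟩ := e.surjective y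
  simp only [mul_diagonal, kroneckerOneAlgHom_apply_apply, single_apply, e.apply_eq_iff_eq,
    Prod.ext_iff, Equiv.symm_trans_apply, Equiv.symm_symm, e.symm_apply_apply, blockFlip_apply,
    Equiv.swap_apply_def]
  grind

theorem single_one_mem_supMatrixCopies [Nontrivial m] (e : m × κ ≃ ι) (a b : ι) :
    single a b 1 ∈ supMatrixCopies R m ι := by
  obtain ⟨-, c⟩ := e.symm a
  have : Nonempty κ := ⟨c⟩
  obtain ⟨i, j, hij⟩ : ∃ i j : m, i = j ↔ a = b := by
    obtain ⟨i, j, hij⟩ := exists_pair_ne m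
    by_cases hab : a = b
    · exact ⟨i, i, by simp [hab]⟩
    · exact ⟨i, j, by simp [hij, hab]⟩
  obtain ⟨j', hj⟩ := exists_ne j
  obtain ⟨σ, hσa, hσb⟩ := Equiv.Perm.exists_apply_eq_and_apply_eq
    (x := e (i, c)) (y := e (j, c)) (by simpa using hij)
  have hunit := kroneckerOneAlgHom_single_mul_single R (e.trans σ) c i hj.symm
  simp only [Equiv.trans_apply, hσa, hσb] at hunit
  rw [← hunit]
  exact mul_mem (kroneckerOneAlgHom_mem_supMatrixCopies R _ _)
    (kroneckerOneAlgHom_mem_supMatrixCopies R _ _)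

theorem supMatrixCopies_eq_top [Nontrivial m] (e : m × κ ≃ ι) :
    supMatrixCopies R m ι = ⊤ := by
  refine eq_top_iff.mpr fun x _ =>
    x.induction_on' (zero_mem _) (fun _ _ => add_mem) fun a b r => ?_
  simpa [smul_single] using Subalgebra.smul_mem _ (single_one_mem_supMatrixCopies R e a b) r

end Matrix

theorem mat2_subalgebras_generate_general (k : Type*) [Field k] (n : ℕ) :
    letI M := Matrix (Fin (2 * n)) (Fin (2 * n)) k
    letI A₀ : Subalgebra k M :=
      ⨆ (S : Subalgebra k M) (_ : Nonempty (S ≃ₐ[k] Matrix (Fin 2) (Fin 2) k)), S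
    (∀ d : Fin (2 * n) → k, Matrix.diagonal d ∈ A₀) ∧ A₀ = ⊤ := by
  have htop : Matrix.supMatrixCopies k (Fin 2) (Fin (2 * n)) = ⊤ :=
    Matrix.supMatrixCopies_eq_top k finProdFinEquiv
  exact ⟨fun _ => htop.ge Algebra.mem_top, htop⟩

/-- let `k` be a field of characteristic 0 (with more than `2n+1` elements) and
let `A_∘` be the subalgebra of `Mat_{2n}(k)` generated by all unital subalgebras isomorphic to
`Mat_2(k)`.  Then every diagonal matrix of `Mat_{2n}(k)` lies in `A_∘`, and consequently (since
`A_∘` is invariant under conjugation by `GL_{2n}(k)`) `A_∘ = Mat_{2n}(k)`. -/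
theorem mat2_subalgebras_generate (k : Type*) [Field k] [CharZero k] (n : ℕ) (hn : 1 ≤ n)
    (hcard : (2 * n + 1 : Cardinal) < Cardinal.mk k) :
    letI M := Matrix (Fin (2 * n)) (Fin (2 * n)) k
    letI A₀ : Subalgebra k M :=
      ⨆ (S : Subalgebra k M) (_ : Nonempty (S ≃ₐ[k] Matrix (Fin 2) (Fin 2) k)), S
    (∀ d : Fin (2 * n) → k, Matrix.diagonal d ∈ A₀) ∧ A₀ = ⊤ :=
  mat2_subalgebras_generate_general k n
end
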